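/- arXiv:2303.15279 — 6 statements merged into one kernel-verified Lean document; each statement's English description precedes it below -/
import Mathlib

section
/- For a functor F with a partial order on each FX such that Ff is monotone, a map f : X → Y, and a relation S ⊆ Y × Y, the uncertain relation lifting satisfies F̂_⊑((f × f)⁻¹(S)) ⊆ (Ff × Ff)⁻¹(F̂_⊑(S)). -/
universe u

/-- The canonical relation lifting of a `Set`-functor `F` (given by its action
on objects and morphisms): `F̂(R) = {(Fπ₁ t, Fπ₂ t) | t ∈ F R}`. -/
def RelLift (F : Type u → Type u)
    (Fmap : ∀ {X Y : Type u}, (X → Y) → F X → F Y)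
    {X : Type u} (R : Set (X × X)) : Set (F X × F X) :=
  {p | ∃ t : F ↥R, Fmap (fun r : ↥R => (r : X × X).1) t = p.1 ∧
       Fmap (fun r : ↥R => (r : X × X).2) t = p.2}

/-- The uncertain relation lifting `F̂_⊑(R) = (⊑) ∘ F̂(R) ∘ (⊒)`:
`(x, y) ∈ F̂_⊑(R)` iff there are `a, b` with `x ⊑ a`, `(a, b) ∈ F̂(R)` and `y ⊑ b`. -/
def UncLift (F : Type u → Type u)
    (Fmap : ∀ {X Y : Type u}, (X → Y) → F X → F Y)
    (le : ∀ {X : Type u}, F X → F X → Prop)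
    {X : Type u} (R : Set (X × X)) : Set (F X × F X) :=
  {p | ∃ a b : F X, le p.1 a ∧ (a, b) ∈ RelLift F (fun {X Y} => @Fmap X Y) R ∧ le p.2 b}

section Lifting

variable (F : Type u → Type u) (Fmap : ∀ {X Y : Type u}, (X → Y) → F X → F Y)

/-- A witness `t : F ((f × f)⁻¹ S)` is pushed forward along the restriction of `f × f`
to a map `(f × f)⁻¹ S → S`; both projections commute with it by functoriality. -/
theorem relLift_preimage_subset
    (hcomp : ∀ {X Y Z : Type u} (f : X → Y) (g : Y → Z) (t : F X),
      Fmap (g ∘ f) t = Fmap g (Fmap f t))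
    {X Y : Type u} (f : X → Y) (S : Set (Y × Y)) :
    RelLift F Fmap (Prod.map f f ⁻¹' S) ⊆
      Prod.map (Fmap f) (Fmap f) ⁻¹' RelLift F Fmap S := by
  rintro ⟨a, b⟩ ⟨t, rfl, rfl⟩
  let g : ↥(Prod.map f f ⁻¹' S) → ↥S := fun r => ⟨Prod.map f f r, r.2⟩
  refine ⟨Fmap g t, ?_, ?_⟩
  · change Fmap (fun r : ↥S => (r : Y × Y).1) (Fmap g t) =
      Fmap f (Fmap (fun r : ↥(Prod.map f f ⁻¹' S) => (r : X × X).1) t)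
    rw [← hcomp, ← hcomp]
    rfl
  · change Fmap (fun r : ↥S => (r : Y × Y).2) (Fmap g t) =
      Fmap f (Fmap (fun r : ↥(Prod.map f f ⁻¹' S) => (r : X × X).2) t)
    rw [← hcomp, ← hcomp]
    rfl

theorem uncLift_subset_preimage_of_relLift_subset_preimage
    (le : ∀ {X : Type u}, F X → F X → Prop)
    (hmono : ∀ {X Y : Type u} (f : X → Y) (a b : F X), le a b → le (Fmap f a) (Fmap f b))
    {X Y : Type u} (f : X → Y) {R : Set (X × X)} {S : Set (Y × Y)}
    (h : RelLift F Fmap R ⊆ Prod.map (Fmap f) (Fmap f) ⁻¹' RelLift F Fmap S) :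
    UncLift F Fmap le R ⊆ Prod.map (Fmap f) (Fmap f) ⁻¹' UncLift F Fmap le S := by
  rintro ⟨x, y⟩ ⟨a, b, hxa, hab, hyb⟩
  exact ⟨Fmap f a, Fmap f b, hmono f x a hxa, h hab, hmono f y b hyb⟩

end Lifting

theorem stmt_7_general (F : Type u → Type u)
    (Fmap : ∀ {X Y : Type u}, (X → Y) → F X → F Y)
    (hcomp : ∀ {X Y Z : Type u} (f : X → Y) (g : Y → Z) (t : F X),
      Fmap (g ∘ f) t = Fmap g (Fmap f t))
    (le : ∀ {X : Type u}, F X → F X → Prop)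
    (hmono : ∀ {X Y : Type u} (f : X → Y) (a b : F X), le a b → le (Fmap f a) (Fmap f b))
    {X Y : Type u} (f : X → Y) (S : Set (Y × Y)) :
    UncLift F (fun {X Y} => @Fmap X Y) (fun {X} => @le X) (Prod.map f f ⁻¹' S) ⊆
      Prod.map (Fmap f) (Fmap f) ⁻¹'
        UncLift F (fun {X Y} => @Fmap X Y) (fun {X} => @le X) S :=
  uncLift_subset_preimage_of_relLift_subset_preimage F Fmap le hmono f
    (relLift_preimage_subset F Fmap hcomp f S)

/-- The uncertain relation lifting laxly preserves inverse images. -/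
theorem stmt_7 (F : Type u → Type u)
    (Fmap : ∀ {X Y : Type u}, (X → Y) → F X → F Y)
    (hid : ∀ {X : Type u} (t : F X), Fmap id t = t)
    (hcomp : ∀ {X Y Z : Type u} (f : X → Y) (g : Y → Z) (t : F X),
      Fmap (g ∘ f) t = Fmap g (Fmap f t))
    (le : ∀ {X : Type u}, F X → F X → Prop)
    (hrefl : ∀ {X : Type u} (a : F X), le a a)
    (htrans : ∀ {X : Type u} (a b c : F X), le a b → le b c → le a c)
    (hanti : ∀ {X : Type u} (a b : F X), le a b → le b a → a = b)
    (hmono : ∀ {X Y : Type u} (f : X → Y) (a b : F X), le a b → le (Fmap f a) (Fmap f b))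
    {X Y : Type u} (f : X → Y) (S : Set (Y × Y)) :
    UncLift F (fun {X Y} => @Fmap X Y) (fun {X} => @le X) (Prod.map f f ⁻¹' S) ⊆
      Prod.map (Fmap f) (Fmap f) ⁻¹'
        UncLift F (fun {X Y} => @Fmap X Y) (fun {X} => @le X) S :=
  stmt_7_general F Fmap hcomp le hmono f S
end

section
/- The final coalgebra of the partial Mealy functor M X = (I ⇀ O × X) is carried by the set of partial functions f : I⁺ ⇀ O on nonempty words that are 'monotone in definedness': for all prefixes v ≤ w of nonempty words, if f(w) is defined then f(v) is defined; with structure map τ(f)(i) = undefined if f(i) is undefined, and τ(f)(i) = (f(i), w ↦ f(i·w)) otherwise. -/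
universe u

/-- The partial Mealy functor `M X = (I ⇀ O × X)` on objects. -/
def MFun (I O X : Type u) : Type u := I → Option (O × X)

/-- The action of the partial Mealy functor on morphisms. -/
def Mmap {I O X Y : Type u} (f : X → Y) (s : MFun I O X) : MFun I O Y :=
  fun i => (s i).map (fun p => (p.1, f p.2))

/-- The flat pointwise order on `M X`: `t ⊑ s` iff each `t i` is undefined or
agrees with `s i`. -/
def Mle {I O X : Type u} (t s : MFun I O X) : Prop :=
  ∀ i : I, t i = none ∨ t i = s i

/-- Candidate carrier of the final coalgebra of the partial Mealy functor:
partial functions on nonempty words that are monotone in definedness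
(defined on `w` implies defined on every nonempty prefix of `w`). -/
def NuM (I O : Type u) : Type u :=
  {f : {w : List I // w ≠ []} → Option O //
    ∀ v w : {w : List I // w ≠ []}, v.1 <+: w.1 → (f w).isSome → (f v).isSome}

/-- The coalgebra structure on `NuM I O`. -/
def tauM {I O : Type u} (f : NuM I O) : MFun I O (NuM I O) := fun i =>
  match f.1 ⟨[i], by simp⟩ with
  | none => none
  | some o =>
    some (o, ⟨fun w => f.1 ⟨i :: w.1, by simp⟩, by
      intro v w hvw hw
      refine f.2 ⟨i :: v.1, by simp⟩ ⟨i :: w.1, by simp⟩ ?_ hw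
      obtain ⟨t, ht⟩ := hvw
      exact ⟨t, by simp [← ht]⟩⟩)

/-! The unique morphism sends a state `x` to its behaviour: run the coalgebra from `x` along a
word and return the output produced at its last letter (undefined as soon as some transition is).
Any morphism `h` agrees with it on `i :: w`, by induction on `w`: if `c x i` is defined, the
morphism equation fixes the output on `i` and identifies `h` at the successor state with the
derivative of `h x` along `i`; if not, `h x` is undefined on `[i]`, hence, by monotonicity in
definedness, on every word beginning with `i`. -/

abbrev NuM.at {I O : Type u} (f : NuM I O) (i : I) (w : List I) : Option O :=
  f.1 ⟨i :: w, List.cons_ne_nil i w⟩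

namespace NuM

variable {I O : Type u}

theorem ext_at {f g : NuM I O} (h : ∀ i w, f.at i w = g.at i w) : f = g := by
  apply Subtype.ext
  funext ⟨w, hw⟩
  obtain ⟨i, w, rfl⟩ := List.exists_cons_of_ne_nil hw
  exact h i w

theorem at_eq_none_of_at_nil_eq_none {f : NuM I O} {i : I} (hi : f.at i [] = none)
    (w : List I) : f.at i w = none := by
  rw [← Option.not_isSome_iff_eq_none] at hi ⊢
  exact fun hw => hi (f.2 _ _ ⟨w, rfl⟩ hw)

def deriv (f : NuM I O) (i : I) : NuM I O :=
  ⟨fun w => f.1 ⟨i :: w.1, List.cons_ne_nil i w.1⟩, fun v w ⟨t, ht⟩ hw =>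
    f.2 _ _ ⟨t, by simp [← ht]⟩ hw⟩

@[simp]
theorem deriv_at (f : NuM I O) (i j : I) (w : List I) : (f.deriv i).at j w = f.at i (j :: w) :=
  rfl

theorem tauM_apply (f : NuM I O) (i : I) :
    tauM f i = (f.at i []).map fun o => (o, f.deriv i) := by
  rcases hi : f.at i [] with _ | o <;>
  · simp only [tauM, NuM.at] at hi ⊢
    rw [hi]
    rfl

end NuM

section Anamorphism

variable {I O C : Type u}

/-- The output a coalgebra `c` started in state `x` produces on the last letter of `i :: w`. -/
def outputAfter (c : C → MFun I O C) (x : C) (i : I) : List I → Option O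
  | [] => (c x i).map Prod.fst
  | j :: w => (c x i).bind fun p => outputAfter c p.2 j w

theorem outputAfter_isSome_of_append (c : C → MFun I O C) (v t : List I) (x : C) (i : I)
    (h : (outputAfter c x i (v ++ t)).isSome) : (outputAfter c x i v).isSome := by
  induction v generalizing x i with
  | nil =>
    cases t with
    | nil => exact h
    | cons j t => cases hc : c x i <;> simp_all [outputAfter]
  | cons j v ih =>
    cases hc : c x i with
    | none => simp_all [outputAfter]
    | some p =>
      simp only [outputAfter, List.cons_append, hc, Option.bind_some] at h ⊢
      exact ih p.2 j h

def behaviour (c : C → MFun I O C) (x : C) : NuM I O :=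
  ⟨fun ⟨w, _⟩ => match w with
    | i :: w => outputAfter c x i w,
   by
    rintro ⟨_ | ⟨i, v⟩, hv⟩ ⟨_, _⟩ ⟨t, rfl⟩ h
    · exact absurd rfl hv
    · exact outputAfter_isSome_of_append c v t x i h⟩

@[simp]
theorem behaviour_at (c : C → MFun I O C) (x : C) (i : I) (w : List I) :
    (behaviour c x).at i w = outputAfter c x i w :=
  rfl

theorem behaviour_isCoalgebraHom (c : C → MFun I O C) (x : C) :
    Mmap (behaviour c) (c x) = tauM (behaviour c x) := by
  funext i
  rw [NuM.tauM_apply, behaviour_at, Mmap]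
  cases hc : c x i with
  | none => simp [outputAfter, hc]
  | some p =>
    have hderiv : behaviour c p.2 = (behaviour c x).deriv i :=
      NuM.ext_at fun j w => by simp [outputAfter, hc]
    simp [outputAfter, hc, hderiv]

theorem at_eq_outputAfter_of_isCoalgebraHom {c : C → MFun I O C} {h : C → NuM I O}
    (hh : ∀ x, Mmap h (c x) = tauM (h x)) (w : List I) (x : C) (i : I) :
    (h x).at i w = outputAfter c x i w := by
  have hstep := congrFun (hh x) i
  rw [Mmap, NuM.tauM_apply] at hstep
  cases hc : c x i with
  | none =>
    rw [hc, Option.map_none, eq_comm, Option.map_eq_none_iff] at hstep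
    cases w <;> simp [NuM.at_eq_none_of_at_nil_eq_none hstep, outputAfter, hc]
  | some p =>
    obtain ⟨o, ho, hpo⟩ := Option.map_eq_some_iff.mp (hc ▸ hstep).symm
    obtain ⟨rfl, hderiv⟩ := Prod.ext_iff.mp hpo
    dsimp only at ho hderiv
    cases w with
    | nil => simp [ho, outputAfter, hc]
    | cons j w =>
      rw [outputAfter, hc, Option.bind_some, ← at_eq_outputAfter_of_isCoalgebraHom hh w p.2 j,
        ← hderiv, NuM.deriv_at]

end Anamorphism

/-- `(NuM I O, tauM)` is the final coalgebra of the partial Mealy functor: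
every coalgebra admits a unique coalgebra morphism into it. -/
theorem stmt_12 {I O : Type u} (C : Type u) (c : C → MFun I O C) :
    ∃! h : C → NuM I O, ∀ x : C, Mmap h (c x) = tauM (h x) :=
  ⟨behaviour c, behaviour_isCoalgebraHom c, fun _ hh => funext fun x =>
    NuM.ext_at fun i w => at_eq_outputAfter_of_isCoalgebraHom hh w x i⟩
end

section
/- States x, y in a partial Mealy machine c : C → (I ⇀ O × C) are uncertain bisimilar if and only if for all nonempty words w ∈ I⁺, whenever both ⟦x⟧(w) and ⟦y⟧(w) are defined, they are equal. Here ⟦·⟧ denotes the unique morphism to the final coalgebra, i.e., ⟦x⟧(w) is the output of the last transition of the run of w from x, if the run exists. -/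
/-!
An uncertain bisimulation is closed under simultaneous steps: when both states accept the same
input, they emit the same output and move to related states. Conversely, a reflexive relation
closed under simultaneous steps is an uncertain bisimulation. Induction on the word shows that
the first property forces the semantics to agree wherever both are defined, and the relation
"the semantics agree wherever both are defined" is reflexive and closed under simultaneous
steps.
-/

universe u

/-- The canonical relation lifting of the partial Mealy functor. -/
def MRelLift {I O X : Type u} (R : Set (X × X)) :
    Set (MFun I O X × MFun I O X) :=
  {p | ∃ t : MFun I O ↥R, Mmap (fun r : ↥R => (r : X × X).1) t = p.1 ∧
       Mmap (fun r : ↥R => (r : X × X).2) t = p.2}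

/-- Uncertain bisimulation on a partial Mealy machine `c : C → M C`:
`R ⊆ (c × c)⁻¹ ((⊑) ∘ M̂(R) ∘ (⊒))`. -/
def MUncBisim {I O C : Type u} (c : C → MFun I O C) (R : Set (C × C)) : Prop :=
  ∀ p ∈ R, ∃ a b : MFun I O C,
    Mle (c p.1) a ∧ (a, b) ∈ MRelLift R ∧ Mle (c p.2) b

/-- Final-coalgebra semantics of a state of a partial Mealy machine: `sem c w x i`
is the output of the last transition of the run of the nonempty word `i :: w`
starting in `x`, if all required transitions exist. -/
def sem {I O C : Type u} (c : C → MFun I O C) : List I → C → I → Option O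
  | [], x, i => (c x i).map Prod.fst
  | j :: w, x, i =>
    match c x i with
    | none => none
    | some p => sem c w p.2 j

variable {I O X C : Type u}

theorem Mle.eq_some_of_eq_some {t s : MFun I O X} (h : Mle t s) {i : I} {p : O × X}
    (ht : t i = some p) : s i = some p :=
  (h i).elim (fun hn => by simp [hn] at ht) (fun he => he ▸ ht)

theorem mem_mRelLift_iff {R : Set (X × X)} {a b : MFun I O X} :
    (a, b) ∈ MRelLift R ↔
      ∀ i, Option.Rel (fun p q : O × X => p.1 = q.1 ∧ (p.2, q.2) ∈ R) (a i) (b i) := by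
  constructor
  · rintro ⟨t, rfl, rfl⟩ i
    simp only [Mmap]
    cases t i with
    | none => exact .none
    | some r => exact .some ⟨rfl, r.2.2⟩
  · intro h
    have hpoint : ∀ i, ∃ u : Option (O × ↥R),
        u.map (fun r => (r.1, (r.2 : X × X).1)) = a i ∧
          u.map (fun r => (r.1, (r.2 : X × X).2)) = b i := by
      intro i
      have hi := h i
      generalize a i = u at hi ⊢
      generalize b i = v at hi ⊢
      cases hi with
      | none => exact ⟨none, rfl, rfl⟩
      | @some p q hpq => exact ⟨some (p.1, ⟨(p.2, q.2), hpq.2⟩), rfl, by simp [hpq.1]⟩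
    choose t ht using hpoint
    exact ⟨t, funext fun i => (ht i).1, funext fun i => (ht i).2⟩

section Bisimulation

variable {c : C → MFun I O C} {R : Set (C × C)}

theorem MUncBisim.step (hR : MUncBisim c R) {x y : C} (hxy : (x, y) ∈ R) {i : I}
    {p q : O × C} (hx : c x i = some p) (hy : c y i = some q) :
    p.1 = q.1 ∧ (p.2, q.2) ∈ R := by
  obtain ⟨a, b, ha, hab, hb⟩ := hR _ hxy
  have hrel := mem_mRelLift_iff.1 hab i
  rwa [ha.eq_some_of_eq_some hx, hb.eq_some_of_eq_some hy, Option.rel_some_some] at hrel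

/-- The bounds `a ⊒ c x` and `b ⊒ c y` fill in each side's undefined inputs with the other
side's transitions; the successors so created are paired with themselves. -/
theorem MUncBisim.of_refl_of_step (hrefl : ∀ z, (z, z) ∈ R)
    (hstep : ∀ x y i p q, (x, y) ∈ R → c x i = some p → c y i = some q →
      p.1 = q.1 ∧ (p.2, q.2) ∈ R) :
    MUncBisim c R := by
  rintro ⟨x, y⟩ hxy
  refine ⟨fun i => (c x i).or (c y i), fun i => (c y i).or (c x i), ?_,
    mem_mRelLift_iff.2 fun i => ?_, ?_⟩
  · intro i
    rcases hx : c x i with _ | p <;> simp [hx]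
  · rcases hx : c x i with _ | p <;> rcases hy : c y i with _ | q
    · exact .none
    · exact .some ⟨rfl, hrefl q.2⟩
    · exact .some ⟨rfl, hrefl p.2⟩
    · exact .some (hstep x y i p q hxy hx hy)
  · intro i
    rcases hy : c y i with _ | q <;> simp [hy]

end Bisimulation

section Semantics

variable {c : C → MFun I O C}

theorem sem_nil_eq_some_iff {x : C} {i : I} {o : O} :
    sem c [] x i = some o ↔ ∃ p, c x i = some p ∧ p.1 = o := by
  simp [sem, Option.map_eq_some_iff]

theorem sem_cons_eq_some_iff {j : I} {w : List I} {x : C} {i : I} {o : O} :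
    sem c (j :: w) x i = some o ↔ ∃ p, c x i = some p ∧ sem c w p.2 j = some o := by
  simp only [sem]
  cases c x i <;> simp

variable (c) in
def semCompat : Set (C × C) :=
  {p | ∀ (i : I) (w : List I) (o o' : O),
    sem c w p.1 i = some o → sem c w p.2 i = some o' → o = o'}

theorem MUncBisim.subset_semCompat {R : Set (C × C)} (hR : MUncBisim c R) :
    R ⊆ semCompat c := by
  rintro ⟨x, y⟩ hxy i w
  induction w generalizing x y i with
  | nil =>
    intro o o' hx hy
    obtain ⟨p, hp, rfl⟩ := sem_nil_eq_some_iff.1 hx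
    obtain ⟨q, hq, rfl⟩ := sem_nil_eq_some_iff.1 hy
    exact (hR.step hxy hp hq).1
  | cons j w ih =>
    intro o o' hx hy
    obtain ⟨p, hp, hpw⟩ := sem_cons_eq_some_iff.1 hx
    obtain ⟨q, hq, hqw⟩ := sem_cons_eq_some_iff.1 hy
    exact ih p.2 q.2 (hR.step hxy hp hq).2 j o o' hpw hqw

theorem semCompat_refl (z : C) : (z, z) ∈ semCompat c :=
  fun _ _ _ _ h h' => Option.some.inj (h.symm.trans h')

theorem semCompat_step {x y : C} (hxy : (x, y) ∈ semCompat c) {i : I} {p q : O × C}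
    (hx : c x i = some p) (hy : c y i = some q) :
    p.1 = q.1 ∧ (p.2, q.2) ∈ semCompat c :=
  ⟨hxy i [] p.1 q.1 (sem_nil_eq_some_iff.2 ⟨p, hx, rfl⟩)
      (sem_nil_eq_some_iff.2 ⟨q, hy, rfl⟩),
    fun j w _ _ hp hq => hxy i (j :: w) _ _ (sem_cons_eq_some_iff.2 ⟨p, hx, hp⟩)
      (sem_cons_eq_some_iff.2 ⟨q, hy, hq⟩)⟩

theorem mUncBisim_semCompat : MUncBisim c (semCompat c) :=
  MUncBisim.of_refl_of_step semCompat_refl fun _ _ _ _ _ hxy hx hy => semCompat_step hxy hx hy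

end Semantics

/-- States `x, y` of a partial Mealy machine are uncertain bisimilar iff their
semantics agree on every nonempty input word on which both are defined. -/
theorem stmt_13 {I O C : Type u} (c : C → MFun I O C) (x y : C) :
    (∃ R : Set (C × C), MUncBisim c R ∧ (x, y) ∈ R) ↔
      ∀ (i : I) (w : List I) (o o' : O),
        sem c w x i = some o → sem c w y i = some o' → o = o' :=
  ⟨fun ⟨_, hR, hxy⟩ => hR.subset_semCompat hxy, fun h => ⟨_, mUncBisim_semCompat, h⟩⟩
end

section
/- If there is a natural transformation ⊤ : 1 → F such that ⊤_X is the greatest element of (FX, ⊑_{FX}) for every X, then in every F-coalgebra all pairs of states are uncertain bisimilar (the total relation C × C is an uncertain bisimulation). -/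
/-!
Naturality of `⊤` sends `⊤_R ∈ F R` to `⊤_C` under both `Fπ₁` and `Fπ₂`, so `(⊤_C, ⊤_C) ∈ F̂(R)` for
every relation `R`, even the empty one. Since `⊤_C` lies above everything, `F̂_⊑(R)` is then all of
`FC × FC`, and every relation on a coalgebra is an uncertain bisimulation.
-/

universe u

/-- `R` is an uncertain bisimulation on a coalgebra `c : C → FC` if
`R ⊆ (c × c)⁻¹ (F̂_⊑ R)`. -/
def UncBisim (F : Type u → Type u)
    (Fmap : ∀ {X Y : Type u}, (X → Y) → F X → F Y)
    (le : ∀ {X : Type u}, F X → F X → Prop)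
    {C : Type u} (c : C → F C) (R : Set (C × C)) : Prop :=
  ∀ p ∈ R, (c p.1, c p.2) ∈ UncLift F (fun {X Y} => @Fmap X Y) (fun {X} => @le X) R

section TopNatTrans

variable (F : Type u → Type u) (Fmap : ∀ {X Y : Type u}, (X → Y) → F X → F Y)
  (le : ∀ {X : Type u}, F X → F X → Prop) (Top : ∀ X : Type u, F X)

theorem top_mem_relLift (hnat : ∀ {X Y : Type u} (f : X → Y), Fmap f (Top X) = Top Y)
    {X : Type u} (R : Set (X × X)) :
    (Top X, Top X) ∈ RelLift F (fun {X Y} => @Fmap X Y) R :=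
  ⟨Top R, hnat _, hnat _⟩

theorem uncLift_eq_univ (htop : ∀ (X : Type u) (a : F X), le a (Top X))
    (hnat : ∀ {X Y : Type u} (f : X → Y), Fmap f (Top X) = Top Y)
    {X : Type u} (R : Set (X × X)) :
    UncLift F (fun {X Y} => @Fmap X Y) (fun {X} => @le X) R = Set.univ :=
  Set.eq_univ_of_forall fun p =>
    ⟨Top X, Top X, htop X p.1, top_mem_relLift F Fmap Top hnat R, htop X p.2⟩

theorem uncBisim_of_top (htop : ∀ (X : Type u) (a : F X), le a (Top X))
    (hnat : ∀ {X Y : Type u} (f : X → Y), Fmap f (Top X) = Top Y)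
    {C : Type u} (c : C → F C) (R : Set (C × C)) :
    UncBisim F (fun {X Y} => @Fmap X Y) (fun {X} => @le X) c R := fun _ _ => by
  rw [uncLift_eq_univ F Fmap le Top htop hnat]
  trivial

end TopNatTrans

theorem stmt_14_general (F : Type u → Type u)
    (Fmap : ∀ {X Y : Type u}, (X → Y) → F X → F Y)
    (le : ∀ {X : Type u}, F X → F X → Prop)
    (Top : ∀ X : Type u, F X)
    (htop : ∀ (X : Type u) (a : F X), le a (Top X))
    (hnat : ∀ {X Y : Type u} (f : X → Y), Fmap f (Top X) = Top Y)
    {C : Type u} (c : C → F C) :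
    UncBisim F (fun {X Y} => @Fmap X Y) (fun {X} => @le X) c Set.univ ∧
      ∀ x y : C, ∃ R : Set (C × C),
        UncBisim F (fun {X Y} => @Fmap X Y) (fun {X} => @le X) c R ∧ (x, y) ∈ R :=
  ⟨uncBisim_of_top F Fmap le Top htop hnat c _,
    fun _ _ => ⟨Set.univ, uncBisim_of_top F Fmap le Top htop hnat c _, trivial⟩⟩

/-- If there is a natural transformation `⊤ : 1 → F` whose components are
greatest elements, then in every coalgebra the total relation is an uncertain
bisimulation, and hence all pairs of states are uncertain bisimilar. -/
theorem stmt_14 (F : Type u → Type u)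
    (Fmap : ∀ {X Y : Type u}, (X → Y) → F X → F Y)
    (hid : ∀ {X : Type u} (t : F X), Fmap id t = t)
    (hcomp : ∀ {X Y Z : Type u} (f : X → Y) (g : Y → Z) (t : F X),
      Fmap (g ∘ f) t = Fmap g (Fmap f t))
    (le : ∀ {X : Type u}, F X → F X → Prop)
    (hrefl : ∀ {X : Type u} (a : F X), le a a)
    (htrans : ∀ {X : Type u} (a b c : F X), le a b → le b c → le a c)
    (hanti : ∀ {X : Type u} (a b : F X), le a b → le b a → a = b)
    (hmono : ∀ {X Y : Type u} (f : X → Y) (a b : F X), le a b → le (Fmap f a) (Fmap f b))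
    (Top : ∀ X : Type u, F X)
    (htop : ∀ (X : Type u) (a : F X), le a (Top X))
    (hnat : ∀ {X Y : Type u} (f : X → Y), Fmap f (Top X) = Top Y)
    {C : Type u} (c : C → F C) :
    UncBisim F (fun {X Y} => @Fmap X Y) (fun {X} => @le X) c Set.univ ∧
      ∀ x y : C, ∃ R : Set (C × C),
        UncBisim F (fun {X Y} => @Fmap X Y) (fun {X} => @le X) c R ∧ (x, y) ∈ R :=
  stmt_14_general F Fmap le Top htop hnat c
end

section
/- Uncertain bisimilarity is preserved by oplax coalgebra morphisms: if states x, y in (C,c) are uncertain bisimilar and h : C → D satisfies Fh(c(z)) ⊒ d(h(z)) for all z ∈ C (an oplax morphism to (D,d)), then h(x) and h(y) are uncertain bisimilar in (D,d). -/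
universe u

/-! The image of an uncertain bisimulation under `h × h` is again one: a witness `t : F R` of
the relation lifting is pushed forward along the corestriction `R → (h × h)(R)`, and the oplax
inequality `d (h z) ⊑ Fh (c z)`, followed by monotonicity of `Fh`, absorbs the change of coalgebra. -/

section Image

variable {F : Type u → Type u} {Fmap : ∀ {X Y : Type u}, (X → Y) → F X → F Y}
  {le : ∀ {X : Type u}, F X → F X → Prop}

theorem RelLift.map_mem_image
    (hcomp : ∀ {X Y Z : Type u} (f : X → Y) (g : Y → Z) (t : F X),
      Fmap (g ∘ f) t = Fmap g (Fmap f t))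
    {C D : Type u} (h : C → D) {R : Set (C × C)} {a b : F C}
    (hab : (a, b) ∈ RelLift F Fmap R) :
    (Fmap h a, Fmap h b) ∈ RelLift F Fmap (Prod.map h h '' R) := by
  obtain ⟨t, rfl, rfl⟩ := hab
  refine ⟨Fmap (Set.mapsTo_image (Prod.map h h) R).restrict t, ?_, ?_⟩ <;>
    simp only [← hcomp] <;> rfl

theorem UncLift.mem_image_of_le_map
    (hcomp : ∀ {X Y Z : Type u} (f : X → Y) (g : Y → Z) (t : F X),
      Fmap (g ∘ f) t = Fmap g (Fmap f t))
    (htrans : ∀ {X : Type u} (a b c : F X), le a b → le b c → le a c)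
    (hmono : ∀ {X Y : Type u} (f : X → Y) (a b : F X), le a b → le (Fmap f a) (Fmap f b))
    {C D : Type u} (h : C → D) {R : Set (C × C)} {u v : F C} {u' v' : F D}
    (huv : (u, v) ∈ UncLift F Fmap le R)
    (hu : le u' (Fmap h u)) (hv : le v' (Fmap h v)) :
    (u', v') ∈ UncLift F Fmap le (Prod.map h h '' R) := by
  obtain ⟨a, b, hua, hab, hvb⟩ := huv
  exact ⟨Fmap h a, Fmap h b, htrans _ _ _ hu (hmono h _ _ hua),
    RelLift.map_mem_image hcomp h hab, htrans _ _ _ hv (hmono h _ _ hvb)⟩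

theorem UncBisim.image_of_oplax
    (hcomp : ∀ {X Y Z : Type u} (f : X → Y) (g : Y → Z) (t : F X),
      Fmap (g ∘ f) t = Fmap g (Fmap f t))
    (htrans : ∀ {X : Type u} (a b c : F X), le a b → le b c → le a c)
    (hmono : ∀ {X Y : Type u} (f : X → Y) (a b : F X), le a b → le (Fmap f a) (Fmap f b))
    {C D : Type u} {c : C → F C} {d : D → F D} {h : C → D}
    (hop : ∀ z : C, le (d (h z)) (Fmap h (c z)))
    {R : Set (C × C)} (hR : UncBisim F Fmap le c R) :
    UncBisim F Fmap le d (Prod.map h h '' R) := by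
  rintro _ ⟨p, hp, rfl⟩
  exact UncLift.mem_image_of_le_map hcomp htrans hmono h (hR p hp) (hop p.1) (hop p.2)

end Image

theorem stmt_17_general (F : Type u → Type u)
    (Fmap : ∀ {X Y : Type u}, (X → Y) → F X → F Y)
    (hcomp : ∀ {X Y Z : Type u} (f : X → Y) (g : Y → Z) (t : F X),
      Fmap (g ∘ f) t = Fmap g (Fmap f t))
    (le : ∀ {X : Type u}, F X → F X → Prop)
    (htrans : ∀ {X : Type u} (a b c : F X), le a b → le b c → le a c)
    (hmono : ∀ {X Y : Type u} (f : X → Y) (a b : F X), le a b → le (Fmap f a) (Fmap f b))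
    {C D : Type u} (c : C → F C) (d : D → F D) (h : C → D)
    (hop : ∀ z : C, le (d (h z)) (Fmap h (c z)))
    (x y : C)
    (hxy : ∃ R : Set (C × C),
      UncBisim F (fun {X Y} => @Fmap X Y) (fun {X} => @le X) c R ∧ (x, y) ∈ R) :
    ∃ S : Set (D × D),
      UncBisim F (fun {X Y} => @Fmap X Y) (fun {X} => @le X) d S ∧ (h x, h y) ∈ S := by
  obtain ⟨R, hR, hxyR⟩ := hxy
  exact ⟨Prod.map h h '' R, hR.image_of_oplax hcomp htrans hmono hop,
    Set.mem_image_of_mem (Prod.map h h) hxyR⟩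

/-- Uncertain bisimilarity is preserved by oplax coalgebra morphisms: if
`h : (C,c) ⇀ (D,d)` is oplax (`Fh(c z) ⊒ d(h z)` for all `z`) and `x, y` are
uncertain bisimilar in `(C,c)`, then `h x, h y` are uncertain bisimilar in `(D,d)`. -/
theorem stmt_17 (F : Type u → Type u)
    (Fmap : ∀ {X Y : Type u}, (X → Y) → F X → F Y)
    (hid : ∀ {X : Type u} (t : F X), Fmap id t = t)
    (hcomp : ∀ {X Y Z : Type u} (f : X → Y) (g : Y → Z) (t : F X),
      Fmap (g ∘ f) t = Fmap g (Fmap f t))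
    (le : ∀ {X : Type u}, F X → F X → Prop)
    (hrefl : ∀ {X : Type u} (a : F X), le a a)
    (htrans : ∀ {X : Type u} (a b c : F X), le a b → le b c → le a c)
    (hanti : ∀ {X : Type u} (a b : F X), le a b → le b a → a = b)
    (hmono : ∀ {X Y : Type u} (f : X → Y) (a b : F X), le a b → le (Fmap f a) (Fmap f b))
    {C D : Type u} (c : C → F C) (d : D → F D) (h : C → D)
    (hop : ∀ z : C, le (d (h z)) (Fmap h (c z)))
    (x y : C)
    (hxy : ∃ R : Set (C × C),
      UncBisim F (fun {X Y} => @Fmap X Y) (fun {X} => @le X) c R ∧ (x, y) ∈ R) :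
    ∃ S : Set (D × D),
      UncBisim F (fun {X Y} => @Fmap X Y) (fun {X} => @le X) d S ∧ (h x, h y) ∈ S :=
  stmt_17_general F Fmap hcomp le htrans hmono c d h hop x y hxy
end

section
/- Suppose the ordered functor F is stable, i.e., F̂_⊑((f × f)⁻¹(S)) = (Ff × Ff)⁻¹(F̂_⊑(S)) for all maps f and all reflexive relations S. Then every lax coalgebra morphism h : (C,c) → (D,d) (meaning Fh(c(x)) ⊑ d(h(x)) for all x) reflects uncertain bisimulations: if R ⊆ D × D is a reflexive uncertain bisimulation on (D,d), then (h × h)⁻¹(R) is an uncertain bisimulation on (C,c). In particular ker h = (h × h)⁻¹(Eq_D) is an uncertain bisimulation on (C,c). -/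
universe u

section

variable (F : Type u → Type u) (Fmap : ∀ {X Y : Type u}, (X → Y) → F X → F Y)
  (le : ∀ {X : Type u}, F X → F X → Prop)

theorem RelLift.diag_mem
    (hid : ∀ {X : Type u} (t : F X), Fmap id t = t)
    (hcomp : ∀ {X Y Z : Type u} (f : X → Y) (g : Y → Z) (t : F X),
      Fmap (g ∘ f) t = Fmap g (Fmap f t))
    {X : Type u} {R : Set (X × X)} (hR : ∀ x : X, (x, x) ∈ R) (t : F X) :
    (t, t) ∈ RelLift F (fun {X Y} => @Fmap X Y) R := by
  -- Push `t` into `F R` along the diagonal `x ↦ (x, x)`; both projections then map it back to `t`.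
  have hproj : ∀ π : X × X → X, (∀ x, π (x, x) = x) →
      Fmap (fun r : ↥R => π r) (Fmap (fun x => (⟨(x, x), hR x⟩ : ↥R)) t) = t := by
    intro π hπ
    rw [← hcomp]
    simp only [Function.comp_def, hπ]
    exact hid t
  exact ⟨_, hproj Prod.fst fun _ => rfl, hproj Prod.snd fun _ => rfl⟩

theorem UncLift.diag_mem
    (hid : ∀ {X : Type u} (t : F X), Fmap id t = t)
    (hcomp : ∀ {X Y Z : Type u} (f : X → Y) (g : Y → Z) (t : F X),
      Fmap (g ∘ f) t = Fmap g (Fmap f t))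
    (hrefl : ∀ {X : Type u} (a : F X), le a a)
    {X : Type u} {R : Set (X × X)} (hR : ∀ x : X, (x, x) ∈ R) (t : F X) :
    (t, t) ∈ UncLift F (fun {X Y} => @Fmap X Y) (fun {X} => @le X) R :=
  ⟨t, t, hrefl t, RelLift.diag_mem F Fmap hid hcomp hR t, hrefl t⟩

theorem UncBisim.diagonal
    (hid : ∀ {X : Type u} (t : F X), Fmap id t = t)
    (hcomp : ∀ {X Y Z : Type u} (f : X → Y) (g : Y → Z) (t : F X),
      Fmap (g ∘ f) t = Fmap g (Fmap f t))
    (hrefl : ∀ {X : Type u} (a : F X), le a a)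
    {D : Type u} (d : D → F D) :
    UncBisim F (fun {X Y} => @Fmap X Y) (fun {X} => @le X) d {q : D × D | q.1 = q.2} := by
  rintro ⟨x, y⟩ (rfl : x = y)
  exact UncLift.diag_mem F Fmap le hid hcomp hrefl (fun _ => rfl) (d x)

theorem UncBisim.preimage_of_lax
    (htrans : ∀ {X : Type u} (a b c : F X), le a b → le b c → le a c)
    (hstable : ∀ {X Y : Type u} (f : X → Y) (S : Set (Y × Y)), (∀ y : Y, (y, y) ∈ S) →
      UncLift F (fun {X Y} => @Fmap X Y) (fun {X} => @le X) (Prod.map f f ⁻¹' S) =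
        Prod.map (Fmap f) (Fmap f) ⁻¹'
          UncLift F (fun {X Y} => @Fmap X Y) (fun {X} => @le X) S)
    {C D : Type u} {c : C → F C} {d : D → F D} {h : C → D}
    (hlax : ∀ x : C, le (Fmap h (c x)) (d (h x)))
    {R : Set (D × D)} (hR : ∀ z : D, (z, z) ∈ R)
    (hbis : UncBisim F (fun {X Y} => @Fmap X Y) (fun {X} => @le X) d R) :
    UncBisim F (fun {X Y} => @Fmap X Y) (fun {X} => @le X) c (Prod.map h h ⁻¹' R) := by
  intro p hp
  -- By stability it suffices that `(Fh (c x), Fh (c y)) ∈ F̂_⊑ R`, and laxness lowers the bisimulation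
  -- witness for `(d (h x), d (h y))` to one for that pair.
  rw [hstable h R hR]
  obtain ⟨a, b, ha, hab, hb⟩ := hbis (h p.1, h p.2) hp
  exact ⟨a, b, htrans _ _ _ (hlax p.1) ha, hab, htrans _ _ _ (hlax p.2) hb⟩

end

theorem stmt_18_general (F : Type u → Type u)
    (Fmap : ∀ {X Y : Type u}, (X → Y) → F X → F Y)
    (hid : ∀ {X : Type u} (t : F X), Fmap id t = t)
    (hcomp : ∀ {X Y Z : Type u} (f : X → Y) (g : Y → Z) (t : F X),
      Fmap (g ∘ f) t = Fmap g (Fmap f t))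
    (le : ∀ {X : Type u}, F X → F X → Prop)
    (hrefl : ∀ {X : Type u} (a : F X), le a a)
    (htrans : ∀ {X : Type u} (a b c : F X), le a b → le b c → le a c)
    (hstable : ∀ {X Y : Type u} (f : X → Y) (S : Set (Y × Y)), (∀ y : Y, (y, y) ∈ S) →
      UncLift F (fun {X Y} => @Fmap X Y) (fun {X} => @le X) (Prod.map f f ⁻¹' S) =
        Prod.map (Fmap f) (Fmap f) ⁻¹'
          UncLift F (fun {X Y} => @Fmap X Y) (fun {X} => @le X) S)
    {C D : Type u} (c : C → F C) (d : D → F D) (h : C → D)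
    (hlax : ∀ x : C, le (Fmap h (c x)) (d (h x))) :
    (∀ R : Set (D × D), (∀ z : D, (z, z) ∈ R) →
      UncBisim F (fun {X Y} => @Fmap X Y) (fun {X} => @le X) d R →
      UncBisim F (fun {X Y} => @Fmap X Y) (fun {X} => @le X) c (Prod.map h h ⁻¹' R)) ∧
    UncBisim F (fun {X Y} => @Fmap X Y) (fun {X} => @le X) c
      {p : C × C | h p.1 = h p.2} := by
  have reflect := fun R hR hbis =>
    UncBisim.preimage_of_lax F Fmap le htrans hstable hlax (R := R) hR hbis
  refine ⟨reflect, ?_⟩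
  -- The kernel of `h` is the preimage of the equality relation on `D`.
  exact reflect {q : D × D | q.1 = q.2} (fun _ => rfl)
    (UncBisim.diagonal F Fmap le hid hcomp hrefl d)

/-- Stability implies that lax coalgebra morphisms reflect (reflexive)
uncertain bisimulations; in particular the kernel of a lax coalgebra morphism
is an uncertain bisimulation. -/
theorem stmt_18 (F : Type u → Type u)
    (Fmap : ∀ {X Y : Type u}, (X → Y) → F X → F Y)
    (hid : ∀ {X : Type u} (t : F X), Fmap id t = t)
    (hcomp : ∀ {X Y Z : Type u} (f : X → Y) (g : Y → Z) (t : F X),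
      Fmap (g ∘ f) t = Fmap g (Fmap f t))
    (le : ∀ {X : Type u}, F X → F X → Prop)
    (hrefl : ∀ {X : Type u} (a : F X), le a a)
    (htrans : ∀ {X : Type u} (a b c : F X), le a b → le b c → le a c)
    (hanti : ∀ {X : Type u} (a b : F X), le a b → le b a → a = b)
    (hmono : ∀ {X Y : Type u} (f : X → Y) (a b : F X), le a b → le (Fmap f a) (Fmap f b))
    (hstable : ∀ {X Y : Type u} (f : X → Y) (S : Set (Y × Y)), (∀ y : Y, (y, y) ∈ S) →
      UncLift F (fun {X Y} => @Fmap X Y) (fun {X} => @le X) (Prod.map f f ⁻¹' S) =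
        Prod.map (Fmap f) (Fmap f) ⁻¹'
          UncLift F (fun {X Y} => @Fmap X Y) (fun {X} => @le X) S)
    {C D : Type u} (c : C → F C) (d : D → F D) (h : C → D)
    (hlax : ∀ x : C, le (Fmap h (c x)) (d (h x))) :
    (∀ R : Set (D × D), (∀ z : D, (z, z) ∈ R) →
      UncBisim F (fun {X Y} => @Fmap X Y) (fun {X} => @le X) d R →
      UncBisim F (fun {X Y} => @Fmap X Y) (fun {X} => @le X) c (Prod.map h h ⁻¹' R)) ∧
    UncBisim F (fun {X Y} => @Fmap X Y) (fun {X} => @le X) c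
      {p : C × C | h p.1 = h p.2} :=
  stmt_18_general F Fmap hid hcomp le hrefl htrans hstable c d h hlax
end
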